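/- Let n ≥ k ≥ 1 be natural numbers and let ℓ₁ = a₁X + b₁Y, …, ℓ_k = a_kX + b_kY be nonzero, pairwise non-proportional linear forms in ℂ[X,Y]. Set q = ∏_{i=1}^k (b_i X − a_i Y). Then a binary form p of degree n satisfies q(∂)p = 0 if and only if p lies in the ℂ-span of ℓ₁ⁿ, …, ℓ_kⁿ; moreover this span has dimension k. -/

import Mathlib

open MvPolynomial

/-- The linear form `a*X + b*Y` in `ℂ[X,Y]`. -/
noncomputable def lin (a b : ℂ) : MvPolynomial (Fin 2) ℂ :=
  MvPolynomial.C a * MvPolynomial.X 0 + MvPolynomial.C b * MvPolynomial.X 1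

/-- The partial derivative `∂_X` (for `i = 0`) or `∂_Y` (for `i = 1`) as a linear map. -/
noncomputable def pd (i : Fin 2) :
    MvPolynomial (Fin 2) ℂ →ₗ[ℂ] MvPolynomial (Fin 2) ℂ :=
  (MvPolynomial.pderiv i).toLinearMap

/-- The apolarity operator `q(∂) = Σ q_{ij} ∂_X^i ∂_Y^j`, as a linear map on `ℂ[X,Y]`. -/
noncomputable def apolarL (q : MvPolynomial (Fin 2) ℂ) :
    MvPolynomial (Fin 2) ℂ →ₗ[ℂ] MvPolynomial (Fin 2) ℂ :=
  q.support.sum fun m => q.coeff m • (pd 0 ^ m 0 * pd 1 ^ m 1)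

/-- The apolarity pairing `⟨q, p⟩`: the value of the constant polynomial `q(∂)p`. -/
noncomputable def pairing (q p : MvPolynomial (Fin 2) ℂ) : ℂ :=
  MvPolynomial.coeff 0 (apolarL q p)

/-! `q ↦ q(∂)` is a ring homomorphism, and `(b X - a Y)(∂)` sends `(a' X + b' Y)^n` to
`n (b a' - a b') (a' X + b' Y)^(n-1)`. Hence `q(∂)` kills every `ℓᵢⁿ`, while the product
of the factors of `q` other than the `i`-th sends `ℓᵢⁿ` to a nonzero multiple of a power of
`ℓᵢ`; this gives linear independence of the `n`-th powers of up to `n + 1` pairwise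
non-proportional forms. Adding `n + 1 - k` further forms shows that `q(∂)` maps the (at most
`(n+1)`-dimensional) space of degree-`n` forms onto a space of dimension at least `n + 1 - k`,
so by rank–nullity the degree-`n` part of its kernel has dimension at most `k`, and therefore
equals the span of the `ℓᵢⁿ`. -/

open Module Submodule

theorem MvPolynomial.pderiv_pderiv_comm {σ R : Type*} [CommSemiring R] (i j : σ)
    (p : MvPolynomial σ R) : pderiv i (pderiv j p) = pderiv j (pderiv i p) := by
  classical
  induction p using MvPolynomial.induction_on with
  | C a => simp
  | add p q hp hq => simp [hp, hq]
  | mul_X p k hp =>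
    simp only [pderiv_mul, map_add, hp, pderiv_X, Pi.single_apply]
    split_ifs <;> simp
    ring

instance MvPolynomial.finite_homogeneousSubmodule {σ R : Type*} [CommSemiring R] [Finite σ]
    (n : ℕ) : Module.Finite R (homogeneousSubmodule σ R n) :=
  Module.Finite.iff_fg.mpr (homogeneousSubmodule_fg σ R n)

theorem MvPolynomial.homogeneousSubmodule_fin_two_le_span {R : Type*} [CommSemiring R] (n : ℕ) :
    homogeneousSubmodule (Fin 2) R n ≤
      span R (Set.range fun j : Fin (n + 1) => X 0 ^ (n - j) * X 1 ^ (j : ℕ)) := by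
  rw [homogeneousSubmodule_eq_finsupp_supported, AddMonoidAlgebra.supported_eq_span_single,
    span_le]
  rintro _ ⟨d, hd, rfl⟩
  have hd : d 0 + d 1 = n := by simpa [Finsupp.degree_eq_sum, Fin.sum_univ_two] using hd
  refine subset_span ⟨⟨d 1, by omega⟩, ?_⟩
  dsimp only
  rw [show n - d 1 = d 0 by omega, single_eq_monomial, monomial_eq,
    Finsupp.prod_fintype _ _ (by simp), Fin.prod_univ_two, C_1, one_mul]

theorem MvPolynomial.finrank_homogeneousSubmodule_fin_two_le {K : Type*} [Field K] (n : ℕ) :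
    finrank K (homogeneousSubmodule (Fin 2) K n) ≤ n + 1 := by
  let v (j : Fin (n + 1)) : MvPolynomial (Fin 2) K := X 0 ^ (n - j) * X 1 ^ (j : ℕ)
  have := FiniteDimensional.span_of_finite K (Set.finite_range v)
  refine (Submodule.finrank_mono (homogeneousSubmodule_fin_two_le_span n)).trans ?_
  simpa [Set.finrank] using finrank_range_le_card (R := K) v

theorem LinearMap.finrank_ker_inf_add_finrank_map {K V W : Type*} [DivisionRing K]
    [AddCommGroup V] [Module K V] [AddCommGroup W] [Module K W] (f : V →ₗ[K] W)
    (H : Submodule K V) [FiniteDimensional K H] :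
    finrank K ↥(H ⊓ ker f) + finrank K ↥(H.map f) = finrank K H := by
  rw [← (f.domRestrict H).finrank_range_add_finrank_ker, range_domRestrict, add_comm,
    ker_domRestrict, ← map_comap_subtype, finrank_map_subtype_eq]

theorem Set.Finite.exists_injective_forall_notMem {α : Type*} [Infinite α] {s : Set α}
    (hs : s.Finite) (m : ℕ) : ∃ t : Fin m → α, Function.Injective t ∧ ∀ j, t j ∉ s :=
  let e := hs.infinite_compl.natEmbedding
  ⟨fun j => e j, fun _ _ h => Fin.val_injective (e.injective (Subtype.ext h)), fun j => (e j).2⟩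

/-- The paper's `ℓ^⊥` for `ℓ = lin a b`. -/
noncomputable def linPerp (a b : ℂ) : MvPolynomial (Fin 2) ℂ := C b * X 0 - C a * X 1

theorem pd_commute : Commute (pd 0) (pd 1) :=
  LinearMap.ext fun p => pderiv_pderiv_comm 0 1 p

noncomputable def pdMonomial :
    Multiplicative (Fin 2 →₀ ℕ) →* Module.End ℂ (MvPolynomial (Fin 2) ℂ) where
  toFun m := pd 0 ^ m.toAdd 0 * pd 1 ^ m.toAdd 1
  map_one' := by simp
  map_mul' x y := by
    simp only [toAdd_mul, Finsupp.add_apply, pow_add]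
    rw [(pd_commute.pow_pow _ _).mul_mul_mul_comm]

noncomputable def apolarAlgHom :
    MvPolynomial (Fin 2) ℂ →ₐ[ℂ] Module.End ℂ (MvPolynomial (Fin 2) ℂ) :=
  AddMonoidAlgebra.lift ℂ _ (Fin 2 →₀ ℕ) pdMonomial

theorem apolarAlgHom_apply (q : MvPolynomial (Fin 2) ℂ) : apolarAlgHom q = apolarL q :=
  (AddMonoidAlgebra.lift_apply pdMonomial q).trans rfl

theorem apolarL_mul (q r : MvPolynomial (Fin 2) ℂ) : apolarL (q * r) = apolarL q * apolarL r := by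
  simp only [← apolarAlgHom_apply, map_mul]

theorem apolarL_linPerp (a b : ℂ) : apolarL (linPerp a b) = b • pd 0 - a • pd 1 := by
  have hX (i : Fin 2) : apolarL (X i) = pd i := by
    rw [← apolarAlgHom_apply]
    refine (AddMonoidAlgebra.lift_single (R := ℂ) pdMonomial (Finsupp.single i 1) 1).trans ?_
    fin_cases i <;> simp [pdMonomial]
  rw [← apolarAlgHom_apply, linPerp, ← smul_eq_C_mul, ← smul_eq_C_mul]
  simp only [map_sub, map_smul, apolarAlgHom_apply, hX]

theorem pderiv_lin (a b : ℂ) : pderiv 0 (lin a b) = C a ∧ pderiv 1 (lin a b) = C b := by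
  simp [lin, pderiv_X]

theorem apolarL_linPerp_lin_pow (a b a' b' : ℂ) (n : ℕ) :
    apolarL (linPerp a b) (lin a' b' ^ n) = (n * (b * a' - a * b')) • lin a' b' ^ (n - 1) := by
  rw [apolarL_linPerp]
  change b • pderiv 0 (lin a' b' ^ n) - a • pderiv 1 (lin a' b' ^ n) = _
  simp only [pderiv_pow, (pderiv_lin a' b').1, (pderiv_lin a' b').2, smul_eq_C_mul, map_mul,
    map_sub, map_natCast]
  ring

theorem apolarL_prod_linPerp_lin_pow {ι : Type*} (s : Finset ι) (a b : ι → ℂ) (a' b' : ℂ)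
    (n : ℕ) :
    apolarL (∏ i ∈ s, linPerp (a i) (b i)) (lin a' b' ^ n) =
      (n.descFactorial s.card * ∏ i ∈ s, (b i * a' - a i * b')) •
        lin a' b' ^ (n - s.card) := by
  classical
  induction s using Finset.induction_on with
  | empty => simp [← apolarAlgHom_apply]
  | insert j s hj ih =>
    rw [Finset.prod_insert hj, apolarL_mul, Module.End.mul_apply, ih, map_smul,
      apolarL_linPerp_lin_pow, smul_smul, Finset.card_insert_of_notMem hj,
      Nat.descFactorial_succ, Finset.prod_insert hj, Nat.sub_sub]
    push_cast
    ring_nf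

theorem lin_ne_zero {a b : ℂ} (h : (a, b) ≠ (0, 0)) : lin a b ≠ 0 := by
  intro h0
  obtain ⟨ha, hb⟩ := pderiv_lin a b
  rw [h0, map_zero, eq_comm, C_eq_zero] at ha hb
  exact h (by rw [ha, hb])

theorem smul_lin (c a b : ℂ) : c • lin a b = lin (c * a) (c * b) := by
  simp only [lin, smul_add, smul_eq_C_mul, map_mul]
  ring

theorem exists_lin_eq_smul_of_cross_eq_zero {a b a' b' : ℂ} (h' : (a', b') ≠ (0, 0))
    (hc : b' * a - a' * b = 0) : ∃ c : ℂ, lin a b = c • lin a' b' := by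
  rcases eq_or_ne a' 0 with rfl | ha'
  · have hb' : b' ≠ 0 := by simpa using h'
    refine ⟨b / b', ?_⟩
    have ha : a = 0 := (mul_eq_zero.mp (by simpa using hc)).resolve_left hb'
    rw [smul_lin, div_mul_cancel₀ b hb', mul_zero, ha]
  · refine ⟨a / a', ?_⟩
    rw [smul_lin, div_mul_cancel₀ a ha']
    congr 1
    field_simp
    linear_combination -hc

theorem apolarL_prod_linPerp_lin_pow_self {ι : Type*} {s : Finset ι} {i : ι} (hi : i ∈ s)
    (a b : ι → ℂ) (n : ℕ) :
    apolarL (∏ j ∈ s, linPerp (a j) (b j)) (lin (a i) (b i) ^ n) = 0 := by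
  rw [apolarL_prod_linPerp_lin_pow, Finset.prod_eq_zero hi (by ring), mul_zero, zero_smul]

theorem linearIndependent_lin_pow {ι : Type*} [Fintype ι] {n : ℕ}
    (hcard : Fintype.card ι ≤ n + 1) {a b : ι → ℂ} (hne : ∀ i, (a i, b i) ≠ (0, 0))
    (hcross : Pairwise fun i j => b i * a j - a i * b j ≠ 0) :
    LinearIndependent ℂ fun i => lin (a i) (b i) ^ n := by
  classical
  refine Fintype.linearIndependent_iff.mpr fun g hg j => ?_
  set s := Finset.univ.erase j
  have hs : s.card ≤ n := by
    rw [Finset.card_erase_of_mem (Finset.mem_univ j), Finset.card_univ]; omega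
  have h := congrArg (apolarL (∏ i ∈ s, linPerp (a i) (b i))) hg
  have hother (i) (hij : i ≠ j) :
      apolarL (∏ i ∈ s, linPerp (a i) (b i)) (g i • lin (a i) (b i) ^ n) = 0 := by
    rw [map_smul, apolarL_prod_linPerp_lin_pow_self (by simpa [s] using hij), smul_zero]
  rw [map_sum, map_zero, Finset.sum_eq_single j (fun i _ => hother i) (by simp), map_smul,
    apolarL_prod_linPerp_lin_pow, smul_smul] at h
  have hcoeff : (n.descFactorial s.card * ∏ i ∈ s, (b i * a j - a i * b j) : ℂ) ≠ 0 :=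
    mul_ne_zero (Nat.cast_ne_zero.mpr (Nat.descFactorial_eq_zero_iff_lt.not.mpr (by omega)))
      (Finset.prod_ne_zero_iff.mpr fun i hi => hcross (Finset.ne_of_mem_erase hi))
  exact (mul_eq_zero.mp ((smul_eq_zero.mp h).resolve_right
    (pow_ne_zero _ (lin_ne_zero (hne j))))).resolve_right hcoeff

theorem finrank_span_lin_pow {ι : Type*} [Fintype ι] {n : ℕ} (hcard : Fintype.card ι ≤ n + 1)
    {a b : ι → ℂ} (hne : ∀ i, (a i, b i) ≠ (0, 0))
    (hcross : Pairwise fun i j => b i * a j - a i * b j ≠ 0) :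
    finrank ℂ (span ℂ (Set.range fun i => lin (a i) (b i) ^ n)) = Fintype.card ι :=
  finrank_span_eq_card (linearIndependent_lin_pow hcard hne hcross)

theorem isHomogeneous_lin_pow (a b : ℂ) (n : ℕ) : (lin a b ^ n).IsHomogeneous n := by
  have h : (lin a b).IsHomogeneous 1 :=
    (isHomogeneous_C_mul_X a 0).add (isHomogeneous_C_mul_X b 1)
  simpa using h.pow n

section Apolar

variable {k n : ℕ} {a b : Fin k → ℂ}

theorem le_finrank_map_apolarL (hkn : k ≤ n) (hne : ∀ i, (a i, b i) ≠ (0, 0)) :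
    n + 1 - k ≤ finrank ℂ
      ((homogeneousSubmodule (Fin 2) ℂ n).map (apolarL (∏ i, linPerp (a i) (b i)))) := by
  -- The extra forms are `X + t j • Y`, with `t j` avoiding every `b i / a i` (which is the junk
  -- value `0` when `a i = 0`, harmless since then `b i ≠ 0`).
  obtain ⟨t, ht_inj, ht⟩ :=
    (Set.finite_range fun i => b i / a i).exists_injective_forall_notMem (n + 1 - k)
  have hcross (i j) : b i * 1 - a i * t j ≠ 0 := by
    rcases eq_or_ne (a i) 0 with ha | ha
    · simpa [ha] using hne i
    · exact fun h => ht j ⟨i, show b i / a i = t j by rw [div_eq_iff ha]; linear_combination h⟩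
  have hmem (j) : lin 1 (t j) ^ (n - k) ∈
      (homogeneousSubmodule (Fin 2) ℂ n).map (apolarL (∏ i, linPerp (a i) (b i))) := by
    have hc : (n.descFactorial k * ∏ i, (b i * 1 - a i * t j) : ℂ) ≠ 0 :=
      mul_ne_zero (Nat.cast_ne_zero.mpr (Nat.descFactorial_eq_zero_iff_lt.not.mpr (by omega)))
        (Finset.prod_ne_zero_iff.mpr fun i _ => hcross i j)
    refine ⟨(n.descFactorial k * ∏ i, (b i * 1 - a i * t j) : ℂ)⁻¹ • lin 1 (t j) ^ n,
      smul_mem _ _ (isHomogeneous_lin_pow 1 (t j) n), ?_⟩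
    rw [map_smul, apolarL_prod_linPerp_lin_pow, Finset.card_univ, Fintype.card_fin,
      inv_smul_smul₀ hc]
  calc n + 1 - k = finrank ℂ (span ℂ (Set.range fun j => lin 1 (t j) ^ (n - k))) := by
        rw [finrank_span_lin_pow (by simp; omega) (by simp)
          fun j j' h => by simpa [sub_eq_zero] using ht_inj.ne h, Fintype.card_fin]
    _ ≤ _ := Submodule.finrank_mono (span_le.mpr (Set.range_subset_iff.mpr hmem))

theorem homogeneousSubmodule_inf_ker_apolarL (hkn : k ≤ n) (hne : ∀ i, (a i, b i) ≠ (0, 0))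
    (hcross : Pairwise fun i j => b i * a j - a i * b j ≠ 0) :
    homogeneousSubmodule (Fin 2) ℂ n ⊓ LinearMap.ker (apolarL (∏ i, linPerp (a i) (b i))) =
      span ℂ (Set.range fun i => lin (a i) (b i) ^ n) := by
  have hS : finrank ℂ (span ℂ (Set.range fun i => lin (a i) (b i) ^ n)) = k := by
    simpa using finrank_span_lin_pow (n := n) (by simp; omega) hne hcross
  have hsum := (apolarL (∏ i, linPerp (a i) (b i))).finrank_ker_inf_add_finrank_map
    (homogeneousSubmodule (Fin 2) ℂ n)
  have hmap := le_finrank_map_apolarL hkn hne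
  have hH := finrank_homogeneousSubmodule_fin_two_le (K := ℂ) n
  refine (eq_of_le_of_finrank_le (span_le.mpr (Set.range_subset_iff.mpr fun i => ?_)) ?_).symm
  · exact ⟨isHomogeneous_lin_pow _ _ n,
      apolarL_prod_linPerp_lin_pow_self (Finset.mem_univ i) a b n⟩
  · omega

end Apolar

theorem apolarity_lemma_squarefree_general
    (n k : ℕ) (hkn : k ≤ n) (a b : Fin k → ℂ)
    (hne : ∀ i, (a i, b i) ≠ (0, 0))
    (hprop : ∀ i j, i ≠ j → ∀ c : ℂ, lin (a i) (b i) ≠ c • lin (a j) (b j))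
    (q : MvPolynomial (Fin 2) ℂ)
    (hq : q = ∏ i : Fin k,
      (MvPolynomial.C (b i) * MvPolynomial.X 0 - MvPolynomial.C (a i) * MvPolynomial.X 1)) :
    (∀ p : MvPolynomial (Fin 2) ℂ, p.IsHomogeneous n →
      (apolarL q p = 0 ↔
        p ∈ Submodule.span ℂ (Set.range fun i : Fin k => lin (a i) (b i) ^ n))) ∧
    Module.finrank ℂ
      ↥(Submodule.span ℂ (Set.range fun i : Fin k => lin (a i) (b i) ^ n)) = k := by
  have hcross : Pairwise fun i j => b i * a j - a i * b j ≠ 0 := fun i j hij hc =>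
    have ⟨c, hc⟩ := exists_lin_eq_smul_of_cross_eq_zero (hne i) hc
    hprop j i hij.symm c hc
  have hker : homogeneousSubmodule (Fin 2) ℂ n ⊓ LinearMap.ker (apolarL q) =
      span ℂ (Set.range fun i => lin (a i) (b i) ^ n) :=
    hq ▸ homogeneousSubmodule_inf_ker_apolarL hkn hne hcross
  refine ⟨fun p hp => ?_, ?_⟩
  · rw [← hker]
    simp [hp]
  · simpa using finrank_span_lin_pow (n := n) (by simp; omega) hne hcross

/-- Squarefree apolarity lemma: for q = ∏ (b_i X − a_i Y) with the forms
a_i X + b_i Y nonzero and pairwise non-proportional, a degree-n form p satisfies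
q(∂)p = 0 iff p lies in the span of the n-th powers of these linear forms, and
this span has dimension k. -/
theorem apolarity_lemma_squarefree
    (n k : ℕ) (hk : 1 ≤ k) (hkn : k ≤ n) (a b : Fin k → ℂ)
    (hne : ∀ i, (a i, b i) ≠ (0, 0))
    (hprop : ∀ i j, i ≠ j → ∀ c : ℂ, lin (a i) (b i) ≠ c • lin (a j) (b j))
    (q : MvPolynomial (Fin 2) ℂ)
    (hq : q = ∏ i : Fin k,
      (MvPolynomial.C (b i) * MvPolynomial.X 0 - MvPolynomial.C (a i) * MvPolynomial.X 1)) :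
    (∀ p : MvPolynomial (Fin 2) ℂ, p.IsHomogeneous n →
      (apolarL q p = 0 ↔
        p ∈ Submodule.span ℂ (Set.range fun i : Fin k => lin (a i) (b i) ^ n))) ∧
    Module.finrank ℂ
      ↥(Submodule.span ℂ (Set.range fun i : Fin k => lin (a i) (b i) ^ n)) = k :=
  apolarity_lemma_squarefree_general n k hkn a b hne hprop q hq
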